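/- Let $(p_j)$ be positive, non-increasing, summable frequencies, $k$ a positive integer, $\Delta\nu(x) = \#\{j: x/2 < p_j \le x\}$ and $D(x) = \int_0^x \Delta\nu(u)\,du$. Assume $\Delta\nu$ is bounded and $D(x)/x \to k$ as $x \downarrow 0$. Then $p_{j+k}/p_j \to 1/2$ as $j \to \infty$. -/

import Mathlib

/-!
Write `E x = D x - k x`, so that `E x = o(x)` as `x ↓ 0`. If `2 p (j + k) ≤ p j`, then on
`[2 p (j + k), p j)` only the indices strictly between `j` and `j + k` are counted, so
`Δν ≤ k - 1` there and integrating gives `p j - 2 p (j + k) ≤ E (2 p (j + k)) - E (p j)`.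
If `p j ≤ 2 p (j + k)`, then on `[p j, 2 p (j + k))` all of `j, …, j + k` are counted, so
`Δν ≥ k + 1` and `2 p (j + k) - p j ≤ E (2 p (j + k)) - E (p j)`. Either way
`|2 p (j + k) - p j| = o(p j)`, i.e. `2 p (j + k) ~ p j`.
-/

open Real Set Filter MeasureTheory

open Topology Asymptotics
open scoped ENNReal

theorem measurable_ncard_setOf_mem {α ι : Type*} [MeasurableSpace α] [Countable ι]
    {s : ι → Set α} (hs : ∀ i, MeasurableSet (s i)) :
    Measurable fun x => ({i | x ∈ s i}.ncard : ℝ) := by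
  have key : ∀ x, ({i | x ∈ s i}.ncard : ℝ) = (∑' i, (s i).indicator 1 x : ℝ≥0∞).toReal := by
    intro x
    have hsum : ∑' i, (s i).indicator 1 x = (({i | x ∈ s i}.encard : ℕ∞) : ℝ≥0∞) := by
      rw [← ENNReal.tsum_set_one, tsum_subtype _ fun _ => (1 : ℝ≥0∞)]
      rfl
    rcases Set.finite_or_infinite {i | x ∈ s i} with hfin | hinf
    · rw [hsum, ← hfin.cast_ncard_eq]; simp
    · rw [hsum, hinf.ncard, hinf.encard_eq]; simp
  simp_rw [key]
  exact (Measurable.tsum fun i => measurable_const.indicator (hs i)).ennreal_toReal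

theorem isLittleO_sub_mul_of_tendsto_div {D : ℝ → ℝ} {c : ℝ}
    (h : Tendsto (fun x => D x / x) (𝓝[>] 0) (𝓝 c)) :
    (fun x => D x - c * x) =o[𝓝[>] 0] fun x => x := by
  have hpos : ∀ᶠ x in 𝓝[>] (0 : ℝ), 0 < x := self_mem_nhdsWithin
  rw [isLittleO_iff_tendsto' (hpos.mono fun x hx h0 => absurd h0 hx.ne')]
  have : Tendsto (fun x => D x / x - c) (𝓝[>] 0) (𝓝 0) := by simpa using h.sub_const c
  refine this.congr' (hpos.mono fun x hx => ?_)
  simp only [sub_div, mul_div_cancel_right₀ _ hx.ne']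

noncomputable def dyadicCount (p : ℕ → ℝ) (x : ℝ) : ℝ := ({j | x / 2 < p j ∧ p j ≤ x}.ncard : ℝ)

theorem measurable_dyadicCount (p : ℕ → ℝ) : Measurable (dyadicCount p) := by
  have : dyadicCount p = fun x => ({j | x ∈ Ico (p j) (2 * p j)}.ncard : ℝ) := by
    ext x
    simp only [dyadicCount, mem_Ico]
    congr! 4 with j
    constructor <;> rintro ⟨h₁, h₂⟩ <;> constructor <;> linarith
  rw [this]
  exact measurable_ncard_setOf_mem fun j => measurableSet_Ico

theorem dyadicCount_nonneg (p : ℕ → ℝ) (x : ℝ) : 0 ≤ dyadicCount p x := Nat.cast_nonneg _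

theorem setOf_half_lt_le_eq_empty (p : ℕ → ℝ) {x : ℝ} (hx : x ≤ 0) :
    {j | x / 2 < p j ∧ p j ≤ x} = ∅ :=
  eq_empty_of_forall_notMem fun _ ⟨h₁, h₂⟩ => by linarith

theorem dyadicCount_of_nonpos (p : ℕ → ℝ) {x : ℝ} (hx : x ≤ 0) : dyadicCount p x = 0 := by
  simp [dyadicCount, setOf_half_lt_le_eq_empty p hx]

theorem intervalIntegrable_dyadicCount {p : ℕ → ℝ} {C : ℝ}
    (hC : ∀ x, 0 < x → dyadicCount p x ≤ C) (a b : ℝ) :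
    IntervalIntegrable (dyadicCount p) volume a b := by
  refine (intervalIntegrable_const (c := C)).mono_fun
    (measurable_dyadicCount p).aestronglyMeasurable (.of_forall fun x => ?_)
  simp only [norm_eq_abs, abs_of_nonneg (dyadicCount_nonneg p x)]
  rcases le_or_gt x 0 with hx | hx
  · rw [dyadicCount_of_nonpos p hx]; exact abs_nonneg C
  · exact (hC x hx).trans (le_abs_self C)

theorem finite_setOf_half_lt_le {p : ℕ → ℝ} (hp : Tendsto p atTop (𝓝 0)) (x : ℝ) :
    {j | x / 2 < p j ∧ p j ≤ x}.Finite := by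
  rcases le_or_gt x 0 with hx | hx
  · simp [setOf_half_lt_le_eq_empty p hx]
  · have : ∀ᶠ j in atTop, p j < x / 2 := hp.eventually (gt_mem_nhds (half_pos hx))
    rw [← Nat.cofinite_eq_atTop, eventually_cofinite] at this
    exact this.subset fun j hj => not_lt.2 hj.1.le

theorem dyadicCount_le_of_mem_Ico {p : ℕ → ℝ} (hp : Antitone p) {j k : ℕ} (hk : 0 < k)
    {x : ℝ} (hx : x ∈ Ico (2 * p (j + k)) (p j)) : dyadicCount p x ≤ k - 1 := by
  have hsub : {i | x / 2 < p i ∧ p i ≤ x} ⊆ Ioo j (j + k) := by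
    rintro i ⟨h₁, h₂⟩
    constructor
    · by_contra! h
      linarith [hp h, hx.2]
    · by_contra! h
      linarith [hp h, hx.1]
  calc dyadicCount p x ≤ ((Ioo j (j + k)).ncard : ℝ) :=
        Nat.cast_le.2 (ncard_le_ncard hsub (finite_Ioo _ _))
    _ = k - 1 := by rw [ncard_Ioo_nat, Nat.add_sub_cancel_left, Nat.cast_sub hk, Nat.cast_one]

theorem le_dyadicCount_of_mem_Ico {p : ℕ → ℝ} (hp : Antitone p)
    (hfin : ∀ x, {j | x / 2 < p j ∧ p j ≤ x}.Finite) {j k : ℕ}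
    {x : ℝ} (hx : x ∈ Ico (p j) (2 * p (j + k))) : k + 1 ≤ dyadicCount p x := by
  have hsub : Icc j (j + k) ⊆ {i | x / 2 < p i ∧ p i ≤ x} := by
    rintro i ⟨h₁, h₂⟩
    constructor
    · linarith [hp h₂, hx.2]
    · linarith [hp h₁, hx.1]
  calc (k : ℝ) + 1 = ((Icc j (j + k)).ncard : ℝ) := by
        rw [ncard_Icc_nat, show j + k + 1 - j = k + 1 by omega]; push_cast; rfl
    _ ≤ dyadicCount p x := Nat.cast_le.2 (ncard_le_ncard hsub (hfin x))

theorem abs_two_mul_sub_le {p : ℕ → ℝ} (hpos : ∀ j, 0 < p j) (hp : Antitone p)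
    (hfin : ∀ x, {j | x / 2 < p j ∧ p j ≤ x}.Finite)
    (hint : ∀ a b, IntervalIntegrable (dyadicCount p) volume a b) {k : ℕ} (hk : 0 < k)
    {D : ℝ → ℝ} (hD : ∀ x, D x = ∫ u in Ioc 0 x, dyadicCount p u) (j : ℕ) :
    |2 * p (j + k) - p j| ≤ |D (2 * p (j + k)) - k * (2 * p (j + k))| + |D (p j) - k * p j| := by
  have hdiff : ∀ a b, 0 ≤ a → 0 ≤ b → D b - D a = ∫ u in a..b, dyadicCount p u := by
    intro a b ha hb
    rw [hD, hD, ← intervalIntegral.integral_of_le ha, ← intervalIntegral.integral_of_le hb,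
      intervalIntegral.integral_interval_sub_left (hint 0 b) (hint 0 a)]
  set a := 2 * p (j + k)
  set b := p j
  have ha : 0 ≤ a := by positivity [hpos (j + k)]
  have hb : 0 ≤ b := (hpos j).le
  rcases le_total a b with hab | hba
  · have hI : ∫ u in a..b, dyadicCount p u ≤ ∫ _ in a..b, ((k : ℝ) - 1) :=
      intervalIntegral.integral_mono_on_of_le_Ioo hab (hint _ _) intervalIntegrable_const
        fun x hx => dyadicCount_le_of_mem_Ico hp hk (Ioo_subset_Ico_self hx)
    rw [intervalIntegral.integral_const, smul_eq_mul, ← hdiff _ _ ha hb] at hI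
    have : b - a ≤ (D a - k * a) - (D b - k * b) := by linear_combination hI
    rw [abs_sub_comm, abs_of_nonneg (sub_nonneg.2 hab)]
    linarith [le_abs_self (D a - k * a), neg_abs_le (D b - k * b)]
  · have hI : ∫ _ in b..a, ((k : ℝ) + 1) ≤ ∫ u in b..a, dyadicCount p u :=
      intervalIntegral.integral_mono_on_of_le_Ioo hba intervalIntegrable_const (hint _ _)
        fun x hx => le_dyadicCount_of_mem_Ico hp hfin (Ioo_subset_Ico_self hx)
    rw [intervalIntegral.integral_const, smul_eq_mul, ← hdiff _ _ hb ha] at hI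
    have : a - b ≤ (D a - k * a) - (D b - k * b) := by linear_combination hI
    rw [abs_of_nonneg (sub_nonneg.2 hba)]
    linarith [le_abs_self (D a - k * a), neg_abs_le (D b - k * b)]

theorem stmt18 (p : ℕ → ℝ) (hpos : ∀ j, 0 < p j) (hmono : ∀ j, p (j + 1) ≤ p j)
    (hsum : Summable p) (k : ℕ) (hk : 0 < k)
    (Δν : ℝ → ℝ) (hΔν : ∀ x : ℝ, Δν x = (({j : ℕ | x / 2 < p j ∧ p j ≤ x}).ncard : ℝ))
    (hbdd : ∃ C : ℝ, ∀ x : ℝ, 0 < x → Δν x ≤ C)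
    (D : ℝ → ℝ) (hD : ∀ x : ℝ, D x = ∫ u in Set.Ioc (0 : ℝ) x, Δν u)
    (hDk : Tendsto (fun x : ℝ => D x / x) (nhdsWithin (0 : ℝ) (Set.Ioi (0 : ℝ))) (nhds (k : ℝ))) :
    Tendsto (fun j : ℕ => p (j + k) / p j) atTop (nhds (1 / 2)) := by
  obtain rfl : Δν = dyadicCount p := funext hΔν
  obtain ⟨C, hC⟩ := hbdd
  have hp : Antitone p := antitone_nat_of_succ_le hmono
  have hp0 : Tendsto p atTop (𝓝 0) := hsum.tendsto_atTop_zero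
  have hE := isLittleO_sub_mul_of_tendsto_div hDk
  have hEb : (fun j => D (p j) - k * p j) =o[atTop] p :=
    hE.comp_tendsto (tendsto_nhdsWithin_iff.2 ⟨hp0, .of_forall hpos⟩)
  have hEa : (fun j => D (2 * p (j + k)) - k * (2 * p (j + k))) =o[atTop] p := by
    have hlim : Tendsto (fun j => 2 * p (j + k)) atTop (𝓝[>] 0) := tendsto_nhdsWithin_iff.2
      ⟨by simpa using (hp0.comp (tendsto_add_atTop_nat k)).const_mul 2,
        .of_forall fun j => mul_pos two_pos (hpos _)⟩
    refine (hE.comp_tendsto hlim).trans_isBigO (IsBigO.of_bound 2 (.of_forall fun j => ?_))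
    simp only [Function.comp, norm_eq_abs, abs_of_pos (hpos j),
      abs_of_pos (mul_pos two_pos (hpos (j + k)))]
    linarith [hp (Nat.le_add_right j k)]
  have hkey := abs_two_mul_sub_le hpos hp (finite_setOf_half_lt_le hp0)
    (intervalIntegrable_dyadicCount hC) hk hD
  have hequiv : (fun j => 2 * p (j + k)) ~[atTop] p :=
    (isBigO_of_le _ fun j => (hkey j).trans (le_abs_self _)).trans_isLittleO
      (hEa.norm_left.add hEb.norm_left)
  have := ((isEquivalent_iff_tendsto_one (.of_forall fun j => (hpos j).ne')).1 hequiv).const_mul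
    (1 / 2)
  simpa [mul_div_assoc] using this
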